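/- arXiv:1301.2379 — 7 statements merged into one kernel-verified Lean document; each statement's English description precedes it below -/
import Mathlib

section
/- Let n ≥ 2 and let K be an n×n real matrix which is a Kolmogorov (master equation) matrix, i.e. K i j ≥ 0 for all i ≠ j and every column of K sums to zero (∑_i K i j = 0 for each j). Then every complex eigenvalue λ of K with λ ≠ 0 satisfies |Im λ| ≤ cot(π/n) · |Re λ|. -/
/-!
Let `v` be a left eigenvector of `K` for `λ`, with `Im λ > 0` after conjugation. Since
`λ vᵢ = ∑ⱼ K j i (vⱼ - vᵢ)`, at every vertex `vᵢ` of the polygon `P = conv {vⱼ}` the vector `λ vᵢ`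
points into `P`; and as `1 + λ / a` maps `P` into itself for large `a` while rotating the plane,
`0` lies in the interior of `P`. Walking around the boundary of `P` gives a cycle of at most `n`
vertices whose consecutive ratios `ρ` satisfy `Im ρ > 0` and `re (ρ w) ≥ re w` for `w = i λ̄`.
Their arguments add up to a positive multiple of `2π` while `∏ ‖ρ‖ = 1`, and the log-concavity of
`cos` on `[-π/2, π/2]` then forces `|arg w| ≥ π / n`, which is the cotangent bound.
-/

open Real Finset ComplexConjugate
open Complex (arg I)

theorem Complex.arg_mem_Ioo_of_im_pos {z : ℂ} (hz : 0 < z.im) : arg z ∈ Set.Ioo 0 π :=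
  ⟨(Complex.arg_nonneg_iff.mpr hz.le).lt_of_ne
      fun h => hz.ne' (Complex.arg_eq_zero_iff.mp h.symm).2,
    Complex.arg_lt_pi_iff.mpr (Or.inr hz.ne')⟩

theorem prod_cos_le_cos_mean_pow {ι : Type*} (s : Finset ι) (x : ι → ℝ)
    (hx : ∀ i ∈ s, x i ∈ Set.Icc (-(π / 2)) (π / 2)) :
    ∏ i ∈ s, Real.cos (x i) ≤ Real.cos ((∑ i ∈ s, x i) / #s) ^ #s := by
  rcases s.eq_empty_or_nonempty with rfl | hs
  · simp
  have hcard : (0 : ℝ) < #s := by exact_mod_cast hs.card_pos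
  have hcos : ∀ i ∈ s, 0 ≤ Real.cos (x i) := fun i hi => Real.cos_nonneg_of_mem_Icc (hx i hi)
  have amgm := Real.geom_mean_le_arith_mean s (fun _ => 1) (fun i => Real.cos (x i))
    (fun _ _ => zero_le_one) (by simpa using hcard) hcos
  have jensen := strictConcaveOn_cos_Icc.concaveOn.le_map_sum (t := s) (w := fun _ => (#s : ℝ)⁻¹)
    (p := x) (fun _ _ => by positivity) (by simp [hcard.ne']) hx
  simp only [Real.rpow_one, sum_const, nsmul_eq_mul, mul_one, one_mul, smul_eq_mul] at amgm jensen
  rw [← mul_sum, ← mul_sum, inv_mul_eq_div, inv_mul_eq_div] at jensen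
  calc ∏ i ∈ s, Real.cos (x i)
      = ((∏ i ∈ s, Real.cos (x i)) ^ (#s : ℝ)⁻¹) ^ #s := by
        rw [← Real.rpow_natCast, ← Real.rpow_mul (prod_nonneg hcos), inv_mul_cancel₀ hcard.ne',
          Real.rpow_one]
    _ ≤ ((∑ i ∈ s, Real.cos (x i)) / #s) ^ #s := by
        gcongr
        exact Real.rpow_nonneg (prod_nonneg hcos) _
    _ ≤ Real.cos ((∑ i ∈ s, x i) / #s) ^ #s := by
        gcongr
        exact div_nonneg (sum_nonneg hcos) hcard.le

theorem Complex.re_mul_eq_norm_mul_norm_mul_cos (x y : ℂ) :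
    (x * y).re = ‖x‖ * ‖y‖ * Real.cos (arg x + arg y) := by
  rw [Real.cos_add, Complex.mul_re, ← Complex.norm_mul_cos_arg x, ← Complex.norm_mul_cos_arg y,
    ← Complex.norm_mul_sin_arg x, ← Complex.norm_mul_sin_arg y]
  ring

theorem two_pi_le_sum_arg_of_prod_eq_one {ι : Type*} {s : Finset ι} (hs : s.Nonempty) {ρ : ι → ℂ}
    (hprod : ∏ j ∈ s, ρ j = 1) (him : ∀ j ∈ s, 0 < (ρ j).im) :
    2 * π ≤ ∑ j ∈ s, arg (ρ j) := by
  have hne : ∀ j ∈ s, ρ j ≠ 0 := fun j hj h => by simpa [h] using him j hj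
  have hexp : Complex.exp ((∑ j ∈ s, arg (ρ j) : ℝ) * I) = 1 := by
    have hnorm : ∏ j ∈ s, (‖ρ j‖ : ℂ) = 1 := by
      rw [← Complex.ofReal_prod, ← norm_prod, hprod, norm_one, Complex.ofReal_one]
    calc Complex.exp ((∑ j ∈ s, arg (ρ j) : ℝ) * I)
        = ∏ j ∈ s, ρ j / ‖ρ j‖ := by
          push_cast
          rw [sum_mul, Complex.exp_sum]
          refine prod_congr rfl fun j hj => ?_
          rw [eq_div_iff (by simpa using hne j hj), mul_comm, Complex.norm_mul_exp_arg_mul_I]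
      _ = 1 := by rw [prod_div_distrib, hprod, hnorm, div_one]
  obtain ⟨k, hk⟩ := Complex.exp_eq_one_iff.mp hexp
  have hk' : ∑ j ∈ s, arg (ρ j) = k * (2 * π) := by
    have := congrArg Complex.im hk
    simpa using this
  have hpos : 0 < ∑ j ∈ s, arg (ρ j) :=
    sum_pos (fun j hj => (Complex.arg_mem_Ioo_of_im_pos (him j hj)).1) hs
  have hk1 : (1 : ℝ) ≤ k := by
    rw [hk'] at hpos
    exact_mod_cast (show (0 : ℤ) < k by exact_mod_cast pos_of_mul_pos_left hpos (by positivity))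
  nlinarith [Real.pi_pos]

theorem Complex.cos_arg_le_norm_mul_cos_arg_add {ρ w : ℂ} (hw : w ≠ 0)
    (h : w.re ≤ (ρ * w).re) : Real.cos (arg w) ≤ ‖ρ‖ * Real.cos (arg ρ + arg w) := by
  rw [Complex.re_mul_eq_norm_mul_norm_mul_cos, ← Complex.norm_mul_cos_arg w] at h
  exact le_of_mul_le_mul_left (by linarith) (norm_pos_iff.mpr hw)

theorem Complex.arg_add_arg_mem_Icc {ρ w : ℂ} (hρ : 0 < ρ.im) (hw : 0 < w.re)
    (h : w.re ≤ (ρ * w).re) : arg ρ + arg w ∈ Set.Icc (-(π / 2)) (π / 2) := by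
  obtain ⟨h0, hπ⟩ := Complex.arg_mem_Ioo_of_im_pos hρ
  obtain ⟨hwl, hwu⟩ := abs_lt.mp (Complex.abs_arg_lt_pi_div_two_iff.mpr (Or.inl hw))
  refine ⟨by linarith, not_lt.mp fun hlt => ?_⟩
  have hneg := Real.cos_neg_of_pi_div_two_lt_of_lt hlt (by linarith)
  have hpos := Real.cos_pos_of_mem_Ioo ⟨hwl, hwu⟩
  have := Complex.cos_arg_le_norm_mul_cos_arg_add (fun h => by simp [h] at hw) h
  nlinarith [norm_nonneg ρ]

theorem pi_div_card_le_abs_arg_of_prod_eq_one {ι : Type*} (s : Finset ι) {ρ : ι → ℂ}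
    (hprod : ∏ j ∈ s, ρ j = 1) (him : ∀ j ∈ s, 0 < (ρ j).im) {w : ℂ} (hw : 0 < w.re)
    (hre : ∀ j ∈ s, w.re ≤ (ρ j * w).re) :
    π / #s ≤ |arg w| := by
  rcases s.eq_empty_or_nonempty with rfl | hs
  · simp
  have hcard : (0 : ℝ) < #s := by exact_mod_cast hs.card_pos
  set τ := arg w
  obtain ⟨hτl, hτu⟩ := abs_lt.mp (Complex.abs_arg_lt_pi_div_two_iff.mpr (Or.inl hw))
  have hcosτ : 0 < Real.cos τ := Real.cos_pos_of_mem_Ioo ⟨hτl, hτu⟩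
  have hmem j (hj : j ∈ s) := Complex.arg_add_arg_mem_Icc (him j hj) hw (hre j hj)
  have hprod_cos : Real.cos τ ^ #s ≤ ∏ j ∈ s, Real.cos (arg (ρ j) + τ) :=
    calc Real.cos τ ^ #s = ∏ j ∈ s, Real.cos τ := (prod_const _).symm
      _ ≤ ∏ j ∈ s, ‖ρ j‖ * Real.cos (arg (ρ j) + τ) :=
        prod_le_prod (fun _ _ => hcosτ.le) fun j hj =>
          Complex.cos_arg_le_norm_mul_cos_arg_add (fun h => by simp [h] at hw) (hre j hj)
      _ = ∏ j ∈ s, Real.cos (arg (ρ j) + τ) := by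
        rw [prod_mul_distrib, ← norm_prod, hprod, norm_one, one_mul]
  set m := (∑ j ∈ s, (arg (ρ j) + τ)) / #s with hm_def
  have hm : 2 * π / #s + τ ≤ m := by
    rw [hm_def, sum_add_distrib, sum_const, nsmul_eq_mul, add_div,
      mul_div_cancel_left₀ _ hcard.ne']
    gcongr
    exact two_pi_le_sum_arg_of_prod_eq_one hs hprod him
  have hm_le : m ≤ π / 2 := by
    rw [hm_def, div_le_iff₀ hcard]
    linarith [sum_le_card_nsmul s _ _ fun j hj => (hmem j hj).2, nsmul_eq_mul (#s) (π / 2)]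
  have hcosm : Real.cos τ ≤ Real.cos m := by
    have hm0 : 0 ≤ 2 * π / #s := by positivity
    refine (pow_le_pow_iff_left₀ hcosτ.le (Real.cos_nonneg_of_mem_Icc ⟨by linarith, hm_le⟩)
      hs.card_pos.ne').mp ?_
    exact hprod_cos.trans (prod_cos_le_cos_mean_pow s _ hmem)
  have hm_abs : m ≤ |τ| := by
    by_contra! h
    have := Real.cos_lt_cos_of_nonneg_of_le_pi (abs_nonneg τ) (by linarith [pi_pos]) h
    rw [Real.cos_abs] at this
    linarith
  have h2 : 2 * π / #s ≤ 2 * |τ| := by linarith [neg_abs_le τ]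
  rw [mul_div_assoc] at h2
  linarith

theorem Real.cot_nonneg {x : ℝ} (h0 : 0 < x) (h : x ≤ π / 2) : 0 ≤ Real.cot x := by
  rw [Real.cot_eq_cos_div_sin]
  exact div_nonneg (Real.cos_nonneg_of_mem_Icc ⟨by linarith, h⟩)
    (Real.sin_pos_of_pos_of_lt_pi h0 (by linarith [pi_pos])).le

theorem Complex.re_le_cot_mul_abs_im {w : ℂ} (hw : 0 < w.re) {θ : ℝ} (hθ : 0 < θ)
    (h : θ ≤ |arg w|) : w.re ≤ Real.cot θ * |w.im| := by
  have harg := Complex.abs_arg_lt_pi_div_two_iff.mpr (Or.inl hw)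
  have hsin : 0 < Real.sin θ := Real.sin_pos_of_pos_of_lt_pi hθ (by linarith)
  rw [← Complex.norm_mul_cos_arg, ← Complex.norm_mul_sin_arg, abs_mul, abs_norm,
    Real.abs_sin_eq_sin_abs_of_abs_le_pi (by linarith), ← Real.cos_abs, Real.cot_eq_cos_div_sin,
    div_mul_eq_mul_div, le_div_iff₀ hsin]
  have : 0 ≤ Real.sin (|arg w| - θ) :=
    Real.sin_nonneg_of_nonneg_of_le_pi (by linarith) (by linarith)
  rw [Real.sin_sub] at this
  nlinarith [norm_nonneg w]

theorem exists_cos_add_nat_mul_pos (α : ℝ) {ψ : ℝ} (hψ0 : 0 < ψ) (hψ : ψ < π) :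
    ∃ k : ℕ, 0 < Real.cos (α + k * ψ) := by
  by_contra! h
  set α₀ := toIcoMod two_pi_pos (π / 2) α
  obtain ⟨hα₀l, hα₀u⟩ := toIcoMod_mem_Ico two_pi_pos (π / 2) α
  have hcos : ∀ k : ℕ, Real.cos (α₀ + k * ψ) ≤ 0 := fun k => by
    have e : α₀ + k * ψ = α + k * ψ - toIcoDiv two_pi_pos (π / 2) α * (2 * π) := by
      rw [← self_sub_toIcoMod_eq_mul]; ring
    rw [e, Real.cos_sub_int_mul_two_pi]
    exact h k
  -- the angle advances by less than the length `π` of the arc where `cos ≤ 0`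
  have hle : ∀ k : ℕ, α₀ + k * ψ ≤ 3 * π / 2 := by
    have key : ∀ x, π / 2 ≤ x → x < 5 * π / 2 → Real.cos x ≤ 0 → x ≤ 3 * π / 2 := by
      intro x hx1 hx2 hx3
      by_contra! hx
      have : 0 < Real.cos (x - 2 * π) := Real.cos_pos_of_mem_Ioo ⟨by linarith, by linarith⟩
      rw [Real.cos_sub_two_pi] at this
      linarith
    intro k
    induction k with
    | zero => simpa using key α₀ hα₀l (by linarith) (by simpa using hcos 0)
    | succ k ih =>
      refine key _ ?_ ?_ (hcos (k + 1)) <;> push_cast <;> nlinarith [k.cast_nonneg (α := ℝ)]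
  obtain ⟨k, hk⟩ := exists_nat_gt (3 * π / 2 / ψ)
  have := hle k
  rw [div_lt_iff₀ hψ0] at hk
  linarith

theorem Complex.exists_pow_mul_re_pos {μ z : ℂ} (hμ : 0 < μ.im) (hz : z ≠ 0) :
    ∃ k : ℕ, 0 < (μ ^ k * z).re := by
  have hμ0 : μ ≠ 0 := fun h => by simp [h] at hμ
  obtain ⟨hψ0, hψπ⟩ := Complex.arg_mem_Ioo_of_im_pos hμ
  obtain ⟨k, hk⟩ := exists_cos_add_nat_mul_pos (arg z) hψ0 hψπ
  refine ⟨k, ?_⟩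
  have hpolar :
      μ ^ k * z = ((‖μ‖ ^ k * ‖z‖ : ℝ) : ℂ) * Complex.exp ((arg z + k * arg μ : ℝ) * I) := by
    conv_lhs => rw [← Complex.norm_mul_exp_arg_mul_I μ, ← Complex.norm_mul_exp_arg_mul_I z]
    rw [mul_pow, ← Complex.exp_nat_mul]
    push_cast
    rw [show ((arg z : ℂ) + k * arg μ) * I = arg z * I + k * (arg μ * I) by ring, Complex.exp_add]
    ring
  rw [hpolar, Complex.re_ofReal_mul, Complex.exp_ofReal_mul_I_re]
  have := norm_pos_iff.mpr hz
  have := norm_pos_iff.mpr hμ0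
  positivity

theorem Complex.im_mul_conj_nonneg_of_arg_le {x y : ℂ} (hx : 0 ≤ x.re) (hy : 0 ≤ y.re)
    (h : arg y ≤ arg x) : 0 ≤ (x * conj y).im := by
  have e : (x * conj y).im = ‖x‖ * ‖y‖ * Real.sin (arg x - arg y) := by
    rw [Real.sin_sub, Complex.mul_im, Complex.conj_re, Complex.conj_im,
      ← Complex.norm_mul_cos_arg x, ← Complex.norm_mul_cos_arg y, ← Complex.norm_mul_sin_arg x,
      ← Complex.norm_mul_sin_arg y]
    ring
  have hx' := abs_le.mp (Complex.abs_arg_le_pi_div_two_iff.mpr hx)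
  have hy' := abs_le.mp (Complex.abs_arg_le_pi_div_two_iff.mpr hy)
  rw [e]
  exact mul_nonneg (by positivity)
    (Real.sin_nonneg_of_nonneg_of_le_pi (by linarith) (by linarith))

section

variable {ι : Type*}

def IsSupportMax (v : ι → ℂ) (c : ℂ) (i : ι) : Prop :=
  ∀ j, (c * v j).re ≤ (c * v i).re

-- `v i → v j` is a counterclockwise edge of the convex hull of the `v k`, with outer normal
-- `conj c`.
def IsHullEdge (v : ι → ℂ) (i j : ι) : Prop :=
  ∃ c, IsSupportMax v c i ∧ IsSupportMax v c j ∧ (c * v i).im < (c * v j).im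

theorem IsHullEdge.exists_isSupportMax {v : ι → ℂ} {i j : ι} (h : IsHullEdge v i j) :
    ∃ c ≠ 0, IsSupportMax v c j := by
  obtain ⟨c, -, hj, hlt⟩ := h
  exact ⟨c, fun hc => by simp [hc] at hlt, hj⟩

theorem exists_ne_of_forall_exists_re_mul_pos {v : ι → ℂ}
    (hpos : ∀ c ≠ 0, ∃ j, 0 < (c * v j).re) (i : ι) : ∃ k, v k ≠ v i := by
  by_contra! hconst
  obtain ⟨j, hj⟩ := hpos 1 one_ne_zero
  obtain ⟨j', hj'⟩ := hpos (-1) (neg_ne_zero.mpr one_ne_zero)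
  simp only [hconst, one_mul, neg_one_mul, Complex.neg_re] at hj hj'
  linarith

theorem exists_isHullEdge [Fintype ι] {v : ι → ℂ} (hpos : ∀ c ≠ 0, ∃ j, 0 < (c * v j).re)
    {c : ℂ} (hc : c ≠ 0) {i : ι} (hi : IsSupportMax v c i) : ∃ j, IsHullEdge v i j := by
  classical
  set d : ι → ℂ := fun k => c * (v i - v k)
  have hd : ∀ k, 0 ≤ (d k).re := fun k => by
    simp only [d, mul_sub, Complex.sub_re]
    linarith [hi k]
  obtain ⟨k₀, hk₀⟩ := exists_ne_of_forall_exists_re_mul_pos hpos i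
  have hJ : (univ.filter fun k => v k ≠ v i).Nonempty := ⟨k₀, mem_filter.mpr ⟨mem_univ _, hk₀⟩⟩
  -- gift wrapping: turn the support direction until the next point `v j` reaches the support line
  obtain ⟨j, hjJ, hjmin⟩ := exists_min_image _ (fun k => arg (d k)) hJ
  have hdj : d j ≠ 0 := mul_ne_zero hc (sub_ne_zero.mpr (mem_filter.mp hjJ).2.symm)
  set c' := c * conj (d j) * (-I)
  have hshift : ∀ k, c' * v k = c' * v i + I * (d k * conj (d j)) := fun k => by
    simp only [c', d]; ring_nf
  have hmax_i : IsSupportMax v c' i := fun k => by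
    rw [hshift k, Complex.add_re, Complex.I_mul_re, add_le_iff_nonpos_right, neg_nonpos]
    by_cases hk : v k = v i
    · simp [d, hk]
    · exact Complex.im_mul_conj_nonneg_of_arg_le (hd k) (hd j)
        (hjmin k (mem_filter.mpr ⟨mem_univ _, hk⟩))
  have hdj_sq : d j * conj (d j) = (Complex.normSq (d j) : ℂ) := Complex.mul_conj (d j)
  refine ⟨j, c', hmax_i, fun k => ?_, ?_⟩
  · rw [hshift j, hdj_sq, Complex.add_re, Complex.I_mul_re, Complex.ofReal_im, neg_zero, add_zero]
    exact hmax_i k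
  · rw [hshift j, hdj_sq, Complex.add_im, Complex.I_mul_im, Complex.ofReal_re, lt_add_iff_pos_right]
    exact Complex.normSq_pos.mpr hdj

end

theorem exists_rel_cycle {α : Type*} [Fintype α] {R : α → α → Prop}
    (hR : ∀ a b, R a b → ∃ c, R b c) {a b : α} (hab : R a b) :
    ∃ p : ℕ → α, (∀ j, R (p j) (p (j + 1))) ∧
      ∃ M, 0 < M ∧ M ≤ Fintype.card α ∧ p M = p 0 := by
  classical
  have : ∀ x, ∃ y, (∃ w, R w x) → R x y := fun x => by
    by_cases h : ∃ w, R w x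
    · obtain ⟨w, hw⟩ := h
      obtain ⟨y, hy⟩ := hR w x hw
      exact ⟨y, fun _ => hy⟩
    · exact ⟨x, fun h' => absurd h' h⟩
  choose f hf using this
  have hreach : ∀ k, ∃ w, R w (f^[k] b) := fun k => by
    induction k with
    | zero => exact ⟨a, hab⟩
    | succ k ih => exact ⟨_, Function.iterate_succ_apply' f k b ▸ hf _ ih⟩
  obtain ⟨k₁, k₂, hne, heq⟩ := Fintype.exists_ne_map_eq_of_card_lt
    (fun k : Fin (Fintype.card α + 1) => f^[k] b) (by simp)
  wlog hlt : k₁ < k₂ generalizing k₁ k₂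
  · exact this k₂ k₁ hne.symm heq.symm (lt_of_le_of_ne (not_lt.mp hlt) hne.symm)
  refine ⟨fun j => f^[k₁ + j] b, fun j => ?_, k₂ - k₁, by omega, by omega, ?_⟩
  · simp only [← add_assoc, Function.iterate_succ_apply']
    exact hf _ (hreach _)
  · simpa [Nat.add_sub_cancel' hlt.le] using heq.symm

theorem Complex.im_div_pos {z z' : ℂ} (hre : z.re = z'.re) (hz : 0 < z.re) (him : z.im < z'.im) :
    0 < (z' / z).im := by
  rw [Complex.div_im, ← hre]
  have : 0 < Complex.normSq z := Complex.normSq_pos.mpr fun h => by simp [h] at hz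
  rw [← sub_div]
  apply div_pos _ this
  nlinarith

theorem Complex.re_le_re_div_mul {z z' l : ℂ} (hre : z.re = z'.re) (hz : z ≠ 0) (him : z.im < z'.im)
    (hl : (l * z).re ≤ 0) : (I * conj l).re ≤ (z' / z * (I * conj l)).re := by
  have hn : 0 < Complex.normSq z := Complex.normSq_pos.mpr hz
  have e : (z' / z * (I * conj l)).re - (I * conj l).re
      = (z'.im - z.im) * -(l * z).re / Complex.normSq z := by
    rw [div_mul_eq_mul_div, Complex.div_re]
    simp only [Complex.mul_re, Complex.mul_im, Complex.I_re, Complex.I_im, Complex.conj_re,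
      Complex.conj_im, Complex.normSq_apply] at hn ⊢
    rw [← hre]
    have hn' : z.re ^ 2 + z.im ^ 2 ≠ 0 := by nlinarith
    field_simp
    ring
  have : 0 ≤ (z'.im - z.im) * -(l * z).re / Complex.normSq z :=
    div_nonneg (mul_nonneg (by linarith) (by linarith)) hn.le
  linarith

namespace Matrix

variable {ι : Type*} [Fintype ι]

theorem exists_vecMul_eq_smul_of_mem_spectrum [DecidableEq ι] {A : Matrix ι ι ℂ} {μ : ℂ}
    (h : μ ∈ spectrum ℂ A) : ∃ v ≠ 0, v ᵥ* A = μ • v := by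
  rw [spectrum.mem_iff, isUnit_iff_isUnit_det, isUnit_iff_ne_zero, not_not] at h
  obtain ⟨v, hv, hvA⟩ := exists_vecMul_eq_zero_iff.mpr h
  refine ⟨v, hv, ?_⟩
  rw [vecMul_sub, Algebra.algebraMap_eq_smul_one, vecMul_smul, vecMul_one, sub_eq_zero] at hvA
  exact hvA.symm

theorem star_vecMul_map_ofReal {A : Matrix ι ι ℝ} {v : ι → ℂ} {l : ℂ}
    (h : v ᵥ* A.map (↑) = l • v) : star v ᵥ* A.map (↑) = star l • star v := by
  ext j
  have := congrArg star (congrFun h j)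
  simpa [vecMul, dotProduct] using this

theorem re_pow_mul_le_of_vecMul_eq [DecidableEq ι] {S : Matrix ι ι ℝ}
    (hS : S ∈ colStochastic ℝ ι) {x : ι → ℂ} {μ : ℂ} (hx : x ᵥ* S.map (↑) = μ • x) {B : ℝ}
    (hB : ∀ i, (x i).re ≤ B) (k : ℕ) (i : ι) :
    (μ ^ k * x i).re ≤ B := by
  induction k generalizing i with
  | zero => simpa using hB i
  | succ k ih =>
    have e : μ ^ (k + 1) * x i = ∑ j, S j i • (μ ^ k * x j) := by
      have := congrFun hx i
      simp only [vecMul, dotProduct, map_apply, Pi.smul_apply, smul_eq_mul] at this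
      rw [pow_succ, mul_assoc, ← this, mul_sum]
      refine sum_congr rfl fun j _ => ?_
      rw [Complex.real_smul]; ring
    rw [e, Complex.re_sum]
    calc ∑ j, (S j i • (μ ^ k * x j)).re ≤ ∑ j, S j i * B := by
          refine sum_le_sum fun j _ => ?_
          rw [Complex.smul_re, smul_eq_mul]
          exact mul_le_mul_of_nonneg_left (ih j) (nonneg_of_mem_colStochastic hS)
      _ = B := by rw [← sum_mul, sum_col_of_mem_colStochastic hS, one_mul]

structure IsKolmogorov (K : Matrix ι ι ℝ) : Prop where
  nonneg_of_ne : ∀ i j, i ≠ j → 0 ≤ K i j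
  sum_col : ∀ j, ∑ i, K i j = 0

namespace IsKolmogorov

variable {K : Matrix ι ι ℝ} {v : ι → ℂ} {l : ℂ}

theorem one_add_inv_smul_mem_colStochastic [DecidableEq ι] (hK : IsKolmogorov K) {a : ℝ}
    (ha : 0 < a) (hdiag : ∀ i, -K i i ≤ a) : 1 + a⁻¹ • K ∈ colStochastic ℝ ι := by
  refine mem_colStochastic_iff_sum.mpr ⟨fun i j => ?_, fun j => ?_⟩
  · simp only [add_apply, smul_apply, smul_eq_mul, one_apply]
    split_ifs with h
    · subst h
      rw [← div_eq_inv_mul, ← neg_le_iff_add_nonneg', le_div_iff₀ ha]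
      linarith [hdiag i]
    · have := hK.nonneg_of_ne i j h
      positivity
  · simp [sum_add_distrib, ← mul_sum, hK.sum_col, one_apply]

theorem exists_re_mul_pos (hK : IsKolmogorov K) (hv : v ≠ 0) (hl : v ᵥ* K.map (↑) = l • v)
    (him : 0 < l.im) {c : ℂ} (hc : c ≠ 0) : ∃ j, 0 < (c * v j).re := by
  classical
  set a := 1 + ∑ i, |K i i|
  have ha : 0 < a := by positivity
  have hdiag : ∀ i, -K i i ≤ a := fun i => by
    have := single_le_sum (fun i _ => abs_nonneg (K i i)) (mem_univ i)
    linarith [neg_le_abs (K i i)]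
  have hS := hK.one_add_inv_smul_mem_colStochastic ha hdiag
  have hx : (c • v) ᵥ* (1 + a⁻¹ • K).map (↑) = (1 + (a⁻¹ : ℝ) * l) • (c • v) := by
    have hmap : (1 + a⁻¹ • K).map Complex.ofReal = 1 + ((a⁻¹ : ℝ) : ℂ) • K.map Complex.ofReal := by
      ext i j
      by_cases h : i = j <;> simp [h]
    rw [hmap, smul_vecMul, vecMul_add, vecMul_one, vecMul_smul, hl, smul_smul]
    module
  -- multiplication by `1 + a⁻¹ * l` keeps the `c * v j` in the half-plane `re ≤ 0`, yet rotates
  by_contra! h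
  obtain ⟨i, hi⟩ := Function.ne_iff.mp hv
  obtain ⟨k, hk⟩ := Complex.exists_pow_mul_re_pos (μ := 1 + (a⁻¹ : ℝ) * l) (by simp; positivity)
    (mul_ne_zero hc hi)
  exact hk.not_ge (re_pow_mul_le_of_vecMul_eq hS hx h k i)

theorem re_mul_mul_nonpos_of_isSupportMax (hK : IsKolmogorov K) (hl : v ᵥ* K.map (↑) = l • v)
    {c : ℂ} {i : ι} (hi : IsSupportMax v c i) : (c * (l * v i)).re ≤ 0 := by
  have hsum : ∑ j, (K j i : ℂ) = 0 := by exact_mod_cast hK.sum_col i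
  have e : c * (l * v i) = ∑ j, K j i • (c * v j - c * v i) := by
    have := congrFun hl i
    simp only [vecMul, dotProduct, map_apply, Pi.smul_apply, smul_eq_mul] at this
    simp only [Complex.real_smul, mul_sub, sum_sub_distrib, ← sum_mul, hsum, zero_mul, sub_zero]
    rw [← this, mul_sum]
    exact sum_congr rfl fun j _ => by ring
  rw [e, Complex.re_sum]
  refine sum_nonpos fun j _ => ?_
  rw [Complex.smul_re, Complex.sub_re, smul_eq_mul]
  rcases eq_or_ne j i with rfl | hji
  · simp
  · exact mul_nonpos_of_nonneg_of_nonpos (hK.nonneg_of_ne j i hji) (sub_nonpos.mpr (hi j))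

theorem pi_div_card_le_abs_arg (hK : IsKolmogorov K) (hv : v ≠ 0) (hl : v ᵥ* K.map (↑) = l • v)
    (him : 0 < l.im) : π / Fintype.card ι ≤ |arg (I * conj l)| := by
  have hpos : ∀ c ≠ 0, ∃ j, 0 < (c * v j).re := fun c hc => hK.exists_re_mul_pos hv hl him hc
  obtain ⟨i, -⟩ := Function.ne_iff.mp hv
  obtain ⟨i₀, -, hi₀⟩ := exists_max_image univ (fun j => (1 * v j).re) ⟨i, mem_univ i⟩
  obtain ⟨j₀, hj₀⟩ := exists_isHullEdge hpos one_ne_zero fun j => hi₀ j (mem_univ j)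
  obtain ⟨p, hp, M, hM, hMcard, hpM⟩ := exists_rel_cycle (fun _ j h =>
    let ⟨_, hc, hj⟩ := h.exists_isSupportMax; exists_isHullEdge hpos hc hj) hj₀
  have hedge : ∀ j, v (p j) ≠ 0 ∧ 0 < (v (p (j + 1)) / v (p j)).im ∧
      (I * conj l).re ≤ (v (p (j + 1)) / v (p j) * (I * conj l)).re := fun j => by
    obtain ⟨c, hci, hcj, hlt⟩ := hp j
    have hc : c ≠ 0 := fun h => by simp [h] at hlt
    obtain ⟨k, hk⟩ := hpos c hc
    have hz : c * v (p j) ≠ 0 := fun h => by simpa [h] using hk.trans_le (hci k)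
    have hre : (c * v (p j)).re = (c * v (p (j + 1))).re := le_antisymm (hcj _) (hci _)
    have hratio := mul_div_mul_left (v (p (j + 1))) (v (p j)) hc
    refine ⟨right_ne_zero_of_mul hz, hratio ▸ Complex.im_div_pos hre (hk.trans_le (hci k)) hlt,
      hratio ▸ Complex.re_le_re_div_mul hre hz hlt ?_⟩
    rw [mul_left_comm]
    exact hK.re_mul_mul_nonpos_of_isSupportMax hl hci
  have hprod : ∏ j ∈ range M, v (p (j + 1)) / v (p j) = 1 := by
    have := congrArg Units.val (prod_range_div (fun j => Units.mk0 _ (hedge j).1) M)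
    simpa [hpM, (hedge 0).1] using this
  have h := pi_div_card_le_abs_arg_of_prod_eq_one (range M) hprod (fun j _ => (hedge j).2.1)
    (by simpa using him) fun j _ => (hedge j).2.2
  rw [card_range] at h
  exact (div_le_div_of_nonneg_left pi_pos.le (by exact_mod_cast hM)
    (by exact_mod_cast hMcard)).trans h

theorem im_le_cot_mul_abs_re (hK : IsKolmogorov K) (hv : v ≠ 0) (hl : v ᵥ* K.map (↑) = l • v)
    (him : 0 < l.im) : l.im ≤ Real.cot (π / Fintype.card ι) * |l.re| := by
  obtain ⟨i, -⟩ := Function.ne_iff.mp hv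
  have : 0 < π / Fintype.card ι := div_pos pi_pos (by exact_mod_cast Fintype.card_pos_iff.mpr ⟨i⟩)
  simpa using Complex.re_le_cot_mul_abs_im (w := I * conj l) (by simpa using him) this
    (hK.pi_div_card_le_abs_arg hv hl him)

end IsKolmogorov

end Matrix

theorem cotangent_bound_for_kolmogorov_eigenvalues_general
    (n : ℕ) (hn : 2 ≤ n) (K : Matrix (Fin n) (Fin n) ℝ)
    (hoff : ∀ i j : Fin n, i ≠ j → 0 ≤ K i j)
    (hcol : ∀ j : Fin n, ∑ i, K i j = 0)
    (lam : ℂ) (hlam : lam ∈ spectrum ℂ (K.map (Complex.ofReal))) :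
    |lam.im| ≤ Real.cot (Real.pi / n) * |lam.re| := by
  have hK : K.IsKolmogorov := ⟨hoff, hcol⟩
  obtain ⟨v, hv, hl⟩ := Matrix.exists_vecMul_eq_smul_of_mem_spectrum hlam
  rcases lt_trichotomy lam.im 0 with hneg | hzero | hpos
  · simpa [abs_of_neg hneg] using hK.im_le_cot_mul_abs_re (star_ne_zero.mpr hv)
      (Matrix.star_vecMul_map_ofReal hl) (by simpa using hneg)
  · rw [hzero, abs_zero]
    exact mul_nonneg (Real.cot_nonneg (by positivity)
      (div_le_div_of_nonneg_left pi_pos.le two_pos (by exact_mod_cast hn))) (abs_nonneg _)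
  · simpa [abs_of_pos hpos] using hK.im_le_cot_mul_abs_re hv hl hpos

/-- Any nonzero complex eigenvalue `λ` of an `n × n` Kolmogorov (master equation) matrix
(`n ≥ 2`) satisfies `|Im λ| ≤ cot (π / n) · |Re λ|`. -/
theorem cotangent_bound_for_kolmogorov_eigenvalues
    (n : ℕ) (hn : 2 ≤ n) (K : Matrix (Fin n) (Fin n) ℝ)
    (hoff : ∀ i j : Fin n, i ≠ j → 0 ≤ K i j)
    (hcol : ∀ j : Fin n, ∑ i, K i j = 0)
    (lam : ℂ) (hlam : lam ∈ spectrum ℂ (K.map (Complex.ofReal)))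
    (hne : lam ≠ 0) :
    |lam.im| ≤ Real.cot (Real.pi / n) * |lam.re| :=
  cotangent_bound_for_kolmogorov_eigenvalues_general n hn K hoff hcol lam hlam
end

section
/- Let n ≥ 2 and q > 0. Let C be the n×n real matrix of the simple irreversible cycle A_1 → A_2 → … → A_n → A_1 with all rate constants equal to q, i.e. C i j = q if i = j + 1 (mod n), C j j = −q, and C i j = 0 otherwise. Then the complex eigenvalue λ = q·(exp(2πi/n) − 1) of C is nonzero when n ≥ 2 (for n ≥ 3 it has nonzero imaginary part) and satisfies |Im λ| = cot(π/n) · |Re λ|. Hence the bound |Im λ| ≤ cot(π/n)·|Re λ| for Kolmogorov matrices is sharp. -/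
/-!
If `ω ^ n = 1`, the vector `j ↦ ω ^ (-j)` is an eigenvector of the cycle matrix with eigenvalue
`q (ω - 1)`, since the cycle shifts index `j` to `j + 1`. For `ω = exp (2 x i)` with `x = π / n`
the half-angle formulas give `Re (ω - 1) = -2 sin² x` and `Im (ω - 1) = 2 sin x cos x`, whose
ratio is `cot x` because `0 < x ≤ π / 2`.
-/

open Complex Real
open scoped Matrix

theorem Matrix.mem_spectrum_of_mulVec_eq_smul {R n : Type*} [CommRing R] [Fintype n]
    [DecidableEq n] {A : Matrix n n R} {μ : R} {v : n → R} (hv : v ≠ 0)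
    (h : A *ᵥ v = μ • v) : μ ∈ spectrum R A :=
  Matrix.spectrum_toLin' A ▸ Module.End.HasEigenvalue.mem_spectrum
    (Module.End.hasEigenvalue_of_hasEigenvector ⟨Module.End.mem_eigenspace_iff.mpr h, hv⟩)

theorem Fin.pow_val_add {M : Type*} [Monoid M] {n : ℕ} {ω : M} (hω : ω ^ n = 1) (a b : Fin n) :
    ω ^ ((a + b : Fin n) : ℕ) = ω ^ (a : ℕ) * ω ^ (b : ℕ) := by
  rw [Fin.val_add, ← pow_eq_pow_mod _ hω, pow_add]

section CycleMatrix

variable {R : Type*} [CommRing R]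

def cycleMatrix (n : ℕ) (q : R) : Matrix (Fin n) (Fin n) R :=
  Matrix.of fun i j => if (i : ℕ) = ((j : ℕ) + 1) % n then q else if i = j then -q else 0

theorem cycleMatrix_map {S : Type*} [CommRing S] (f : R →+* S) (n : ℕ) (q : R) :
    (cycleMatrix n q).map f = cycleMatrix n (f q) := by
  ext i j
  simp only [cycleMatrix, Matrix.map_apply, Matrix.of_apply]
  split_ifs <;> simp

theorem cycleMatrix_apply (m : ℕ) (q : R) (i j : Fin (m + 2)) :
    cycleMatrix (m + 2) q i j = (if j = i - 1 then q else 0) - if j = i then q else 0 := by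
  have hsucc : (i : ℕ) = ((j : ℕ) + 1) % (m + 2) ↔ j = i - 1 := by
    rw [eq_sub_iff_add_eq, Fin.ext_iff, Fin.val_add, Fin.val_one, eq_comm]
  simp only [cycleMatrix, Matrix.of_apply, hsucc]
  by_cases hpred : j = i - 1
  · simp [hpred]
  · simp only [if_neg hpred, zero_sub, eq_comm (a := i)]
    split_ifs <;> simp

theorem cycleMatrix_mem_spectrum [Nontrivial R] (m : ℕ) (q : R) {ω : R}
    (hω : ω ^ (m + 2) = 1) : q * (ω - 1) ∈ spectrum R (cycleMatrix (m + 2) q) := by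
  set v : Fin (m + 2) → R := fun j => ω ^ ((-j : Fin (m + 2)) : ℕ)
  have hshift : ∀ i, v (i - 1) = ω * v i := fun i => by
    simp only [v]
    rw [neg_sub, sub_eq_add_neg, Fin.pow_val_add hω, Fin.val_one, pow_one]
  refine Matrix.mem_spectrum_of_mulVec_eq_smul (v := v) (fun h => ?_) (funext fun i => ?_)
  · simpa [v] using congrFun h 0
  · simp only [Matrix.mulVec, dotProduct, cycleMatrix_apply, sub_mul, ite_mul, zero_mul,
      Finset.sum_sub_distrib, Finset.sum_ite_eq', Finset.mem_univ, if_true, hshift,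
      Pi.smul_apply, smul_eq_mul]
    ring

end CycleMatrix

theorem Real.abs_sin_two_mul_eq_cot_mul_abs_cos_two_mul_sub_one {x : ℝ} (hx₀ : 0 ≤ x)
    (hx : x ≤ π / 2) : |Real.sin (2 * x)| = Real.cot x * |Real.cos (2 * x) - 1| := by
  have hsin : 0 ≤ Real.sin x := Real.sin_nonneg_of_nonneg_of_le_pi hx₀ (by linarith [pi_pos])
  have hcos : 0 ≤ Real.cos x := Real.cos_nonneg_of_mem_Icc ⟨by linarith [pi_pos], hx⟩
  have hcos_sub : Real.cos (2 * x) - 1 = -(2 * Real.sin x ^ 2) := by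
    rw [Real.cos_two_mul, Real.cos_sq']
    ring
  rw [hcos_sub, Real.sin_two_mul, abs_neg, abs_of_nonneg (by positivity),
    abs_of_nonneg (by positivity), Real.cot_eq_cos_div_sin]
  rcases hsin.eq_or_lt with h | h
  · simp [← h]
  · field_simp

/-- For the simple irreversible cycle `A₁ → A₂ → … → Aₙ → A₁` with all rate constants
equal to `q > 0` (`n ≥ 2`), the number `λ = q (exp (2πi/n) − 1)` is a nonzero eigenvalue
(with nonzero imaginary part when `n ≥ 3`) and satisfies `|Im λ| = cot (π/n) · |Re λ|`:
the cotangent bound for Kolmogorov matrices is sharp. -/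
theorem simple_cycle_eigenvalue_attains_cotangent_bound
    (n : ℕ) (hn : 2 ≤ n) (q : ℝ) (hq : 0 < q)
    (C : Matrix (Fin n) (Fin n) ℝ)
    (hC : C = Matrix.of fun i j : Fin n =>
      if (i : ℕ) = ((j : ℕ) + 1) % n then q else if i = j then -q else 0)
    (lam : ℂ)
    (hlamdef : lam = q * (Complex.exp (2 * Real.pi * Complex.I / n) - 1)) :
    lam ∈ spectrum ℂ (C.map (Complex.ofReal)) ∧
    lam ≠ 0 ∧
    (3 ≤ n → lam.im ≠ 0) ∧
    |lam.im| = Real.cot (Real.pi / n) * |lam.re| := by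
  have hprim := isPrimitiveRoot_exp n (by omega)
  have hx₀ : 0 < π / n := by positivity
  have hx : π / n ≤ π / 2 := div_le_div_of_nonneg_left pi_pos.le two_pos (by exact_mod_cast hn)
  have hexp : exp (2 * π * I / n) = exp (↑(2 * (π / n)) * I) := by
    push_cast
    ring_nf
  have hre : lam.re = q * (Real.cos (2 * (π / n)) - 1) := by
    rw [hlamdef, hexp, re_ofReal_mul, sub_re, one_re, exp_ofReal_mul_I_re]
  have him : lam.im = q * Real.sin (2 * (π / n)) := by
    rw [hlamdef, hexp, im_ofReal_mul, sub_im, one_im, sub_zero, exp_ofReal_mul_I_im]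
  refine ⟨?_, ?_, fun h3 => ?_, ?_⟩
  · obtain ⟨m, rfl⟩ : ∃ m, n = m + 2 := ⟨n - 2, by omega⟩
    have hC' : C.map ofReal = cycleMatrix (m + 2) (q : ℂ) := hC ▸ cycleMatrix_map ofRealHom _ q
    rw [hlamdef, hC']
    exact cycleMatrix_mem_spectrum m _ hprim.pow_eq_one
  · rw [hlamdef]
    exact mul_ne_zero (ofReal_ne_zero.mpr hq.ne') (sub_ne_zero.mpr (hprim.ne_one (by omega)))
  · have h2x : 2 * (π / n) < π := by
      rw [mul_div_assoc', div_lt_iff₀ (by positivity)]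
      linarith [mul_le_mul_of_nonneg_left (by exact_mod_cast h3 : (3 : ℝ) ≤ n) pi_pos.le]
    rw [him]
    exact (mul_pos hq (Real.sin_pos_of_pos_of_lt_pi (by positivity) h2x)).ne'
  · rw [him, hre, abs_mul, abs_mul,
      Real.abs_sin_two_mul_eq_cot_mul_abs_cos_two_mul_sub_one hx₀.le hx, mul_left_comm]
end

section
/- Let K be an n×n real Kolmogorov matrix (K i j ≥ 0 for i ≠ j, and ∑_i K i j = 0 for each j). Then there exists a vector P* in the standard simplex Δ_n = { P ∈ ℝ^n : P_i ≥ 0 for all i, ∑_i P_i = 1 } such that K P* = 0 (an equilibrium). -/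
/-!
If `0` were not in the compact convex set `K Δₙ`, Hahn–Banach would give a linear form `y`
that is positive on every column of `K`, i.e. `(yᵀ K)ⱼ > 0` for all `j`. But at an index `j`
where `y` is maximal, zero column sums give `(yᵀ K)ⱼ = ∑ᵢ (yᵢ - yⱼ) Kᵢⱼ`, and every term is
`≤ 0` because the off-diagonal entries are nonnegative.
-/

open Finset Matrix

namespace Matrix

variable {ι : Type*} [Fintype ι] {K : Matrix ι ι ℝ}

theorem exists_vecMul_nonpos_of_kolmogorov [Nonempty ι] (hoff : ∀ i j, i ≠ j → 0 ≤ K i j)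
    (hcol : ∀ j, ∑ i, K i j = 0) (y : ι → ℝ) : ∃ j, (y ᵥ* K) j ≤ 0 := by
  obtain ⟨j, -, hmax⟩ := exists_max_image univ y univ_nonempty
  refine ⟨j, ?_⟩
  have hshift : (y ᵥ* K) j = ∑ i, (y i - y j) * K i j := by
    simp only [vecMul, dotProduct, sub_mul, sum_sub_distrib, ← mul_sum, hcol, mul_zero, sub_zero]
  rw [hshift]
  refine sum_nonpos fun i _ => ?_
  obtain rfl | hij := eq_or_ne i j
  · simp
  · exact mul_nonpos_of_nonpos_of_nonneg (sub_nonpos.2 (hmax i (mem_univ i))) (hoff i j hij)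

theorem zero_mem_mulVec_image_stdSimplex [Nonempty ι] (hoff : ∀ i j, i ≠ j → 0 ≤ K i j)
    (hcol : ∀ j, ∑ i, K i j = 0) : (0 : ι → ℝ) ∈ K.mulVec '' stdSimplex ℝ ι := by
  classical
  by_contra h0
  have hconv : Convex ℝ (K.mulVecLin '' stdSimplex ℝ ι) :=
    (convex_stdSimplex ℝ ι).linear_image _
  have hcpt : IsCompact (K.mulVecLin '' stdSimplex ℝ ι) :=
    (isCompact_stdSimplex ℝ ι).image K.mulVecLin.continuous_of_finiteDimensional
  obtain ⟨f, u, hf0, hfpos⟩ := geometric_hahn_banach_point_closed hconv hcpt.isClosed h0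
  obtain ⟨j, hj⟩ := exists_vecMul_nonpos_of_kolmogorov hoff hcol fun i => f (Pi.single i 1)
  have hcolumn : f (K *ᵥ Pi.single j 1) = ((fun i => f (Pi.single i 1)) ᵥ* K) j := by
    conv_lhs => rw [mulVec_single_one, pi_eq_sum_univ' (K.col j)]
    simp [vecMul, dotProduct, mul_comm]
  have hpos := hfpos _ ⟨Pi.single j 1, single_mem_stdSimplex ℝ j, rfl⟩
  simp only [map_zero, mulVecLin_apply] at hf0 hpos
  linarith

end Matrix

/-- Every Kolmogorov matrix has an equilibrium in the standard simplex:
there is `P* ∈ Δₙ` with `K P* = 0`. -/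
theorem kolmogorov_has_equilibrium_in_simplex
    (n : ℕ) (hn : 0 < n) (K : Matrix (Fin n) (Fin n) ℝ)
    (hoff : ∀ i j : Fin n, i ≠ j → 0 ≤ K i j)
    (hcol : ∀ j : Fin n, ∑ i, K i j = 0) :
    ∃ P : Fin n → ℝ, (∀ i, 0 ≤ P i) ∧ (∑ i, P i = 1) ∧ K.mulVec P = 0 := by
  have : Nonempty (Fin n) := ⟨⟨0, hn⟩⟩
  obtain ⟨P, ⟨hPnonneg, hPsum⟩, hKP⟩ := zero_mem_mulVec_image_stdSimplex hoff hcol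
  exact ⟨P, hPnonneg, hPsum, hKP⟩
end

section
/- Let K be an n×n real Kolmogorov matrix (K i j ≥ 0 for i ≠ j, and ∑_i K i j = 0 for each j) that admits a positive equilibrium, i.e. a vector P* with P*_i > 0 for all i and K P* = 0. Then K has no nonzero purely imaginary eigenvalue: if λ ∈ ℂ is an eigenvalue of K with Re λ = 0, then λ = 0. -/
/-!
Conjugating `K` by `diagonal P*` gives a matrix with nonnegative off-diagonal entries whose row
sums vanish, because `K P* = 0`. Gershgorin's theorem for that matrix puts every eigenvalue in a
closed disc centred at some `K k k ≤ 0` with radius `-K k k`, and such a disc meets the imaginary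
axis only at `0`.
-/

open Finset Matrix

variable {𝕜 n : Type*} [NormedField 𝕜] [Fintype n] [DecidableEq n]

-- Gershgorin's theorem for the similar matrix `diagonal w⁻¹ * A * diagonal w`.
theorem Matrix.exists_norm_sub_diag_mul_le_of_mem_spectrum {A : Matrix n n 𝕜} {μ : 𝕜}
    (hμ : μ ∈ spectrum 𝕜 A) {w : n → 𝕜} (hw : ∀ i, w i ≠ 0) :
    ∃ k, ‖μ - A k k‖ * ‖w k‖ ≤ ∑ j ∈ univ.erase k, ‖A k j‖ * ‖w j‖ := by
  let u : (Matrix n n 𝕜)ˣ := ⟨diagonal w, diagonal w⁻¹, by simp [diagonal_mul_diagonal, hw],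
    by simp [diagonal_mul_diagonal, hw]⟩
  have hentry : ∀ i j, (u⁻¹ * A * u : Matrix n n 𝕜) i j = (w i)⁻¹ * A i j * w j := by
    intro i j
    simp [u, diagonal_mul, mul_diagonal]
  have hB : μ ∈ spectrum 𝕜 (u⁻¹ * A * u : Matrix n n 𝕜) := by rwa [spectrum.units_conjugate']
  rw [← spectrum_toLin', ← Module.End.hasEigenvalue_iff_mem_spectrum] at hB
  obtain ⟨k, hk⟩ := eigenvalue_mem_ball hB
  refine ⟨k, ?_⟩
  have hdiag : (u⁻¹ * A * u : Matrix n n 𝕜) k k = A k k := by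
    rw [hentry]
    field_simp [hw k]
  rw [mem_closedBall_iff_norm, hdiag] at hk
  simp only [hentry, norm_mul, norm_inv] at hk
  rw [← le_div_iff₀ (norm_pos_iff.2 (hw k)), sum_div]
  refine hk.trans_eq (sum_congr rfl fun j _ => ?_)
  field_simp

theorem Complex.eq_zero_of_re_eq_zero_of_norm_sub_ofReal_le_neg {z : ℂ} {c : ℝ}
    (hz : ‖z - c‖ ≤ -c) (hre : z.re = 0) : z = 0 := by
  have hsq := pow_le_pow_left₀ (norm_nonneg _) hz 2
  rw [Complex.sq_norm, Complex.normSq_apply] at hsq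
  simp only [Complex.sub_re, Complex.sub_im, Complex.ofReal_re, Complex.ofReal_im, hre] at hsq
  exact Complex.ext hre (by simpa using (show z.im ^ 2 = 0 by nlinarith))

theorem Matrix.exists_norm_sub_diag_le_neg_diag_of_mulVec_eq_zero {K : Matrix n n ℝ}
    (hoff : Pairwise fun i j => 0 ≤ K i j) {P : n → ℝ} (hpos : ∀ i, 0 < P i)
    (heq : K *ᵥ P = 0) {μ : ℂ} (hμ : μ ∈ spectrum ℂ (K.map Complex.ofReal)) :
    ∃ k, ‖μ - K k k‖ ≤ -K k k := by
  obtain ⟨k, hk⟩ := (K.map Complex.ofReal).exists_norm_sub_diag_mul_le_of_mem_spectrum hμ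
    (w := fun i => (P i : ℂ)) fun i => Complex.ofReal_ne_zero.2 (hpos i).ne'
  have hrow : ∑ j ∈ univ.erase k, K k j * P j = -K k k * P k := by
    have h0 : ∑ j, K k j * P j = 0 := by simpa [mulVec, dotProduct] using congrFun heq k
    rw [sum_erase_eq_sub (mem_univ k), h0, zero_sub, neg_mul]
  refine ⟨k, le_of_mul_le_mul_right ?_ (hpos k)⟩
  calc ‖μ - K k k‖ * P k
      = ‖μ - K k k‖ * ‖(P k : ℂ)‖ := by rw [Complex.norm_real, Real.norm_of_nonneg (hpos k).le]
    _ ≤ ∑ j ∈ univ.erase k, ‖(K k j : ℂ)‖ * ‖(P j : ℂ)‖ := by simpa using hk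
    _ = ∑ j ∈ univ.erase k, K k j * P j := by
        refine sum_congr rfl fun j hj => ?_
        rw [Complex.norm_real, Complex.norm_real, Real.norm_of_nonneg (hpos j).le,
          Real.norm_of_nonneg (hoff (ne_of_mem_erase hj).symm)]
    _ = -K k k * P k := hrow

theorem kolmogorov_no_imaginary_eigenvalue_general
    (n : ℕ) (K : Matrix (Fin n) (Fin n) ℝ)
    (hoff : ∀ i j : Fin n, i ≠ j → 0 ≤ K i j)
    (Pstar : Fin n → ℝ) (hpos : ∀ i, 0 < Pstar i) (heq : K.mulVec Pstar = 0)
    (lam : ℂ) (hlam : lam ∈ spectrum ℂ (K.map (Complex.ofReal)))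
    (hre : lam.re = 0) :
    lam = 0 := by
  obtain ⟨k, hk⟩ := K.exists_norm_sub_diag_le_neg_diag_of_mulVec_eq_zero hoff hpos heq hlam
  exact Complex.eq_zero_of_re_eq_zero_of_norm_sub_ofReal_le_neg hk hre

/-- A Kolmogorov matrix with a positive equilibrium has no nonzero purely imaginary
eigenvalue. -/
theorem kolmogorov_no_imaginary_eigenvalue
    (n : ℕ) (K : Matrix (Fin n) (Fin n) ℝ)
    (hoff : ∀ i j : Fin n, i ≠ j → 0 ≤ K i j)
    (hcol : ∀ j : Fin n, ∑ i, K i j = 0)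
    (Pstar : Fin n → ℝ) (hpos : ∀ i, 0 < Pstar i) (heq : K.mulVec Pstar = 0)
    (lam : ℂ) (hlam : lam ∈ spectrum ℂ (K.map (Complex.ofReal)))
    (hre : lam.re = 0) :
    lam = 0 :=
  kolmogorov_no_imaginary_eigenvalue_general n K hoff Pstar hpos heq lam hlam hre
end

section
/- Let m ≥ 3 and let α_i, β_i, γ_i ∈ (0, π) for i = 1, …, m satisfy: ∑_i β_i = 2π, α_i + β_i + γ_i = π for each i, and ∏_i sin α_i = ∏_i sin γ_i. Then min_i α_i ≤ π/2 − π/m. Moreover this bound is attained: the choice α_i = γ_i = π/2 − π/m, β_i = 2π/m for all i satisfies all the conditions and gives min_i α_i = π/2 − π/m. -/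
/-!
Put `d = π/2 - π/m` and suppose every `αᵢ > d`. Since `γᵢ = π - αᵢ - βᵢ`, the identity
`sin a · sin (a + c - d) - sin d · sin c = sin (a + c) · sin (a - d)` gives
`sin d · sin γᵢ < sin αᵢ · sin xᵢ` with `xᵢ = αᵢ + γᵢ - d ∈ (0, π)`. Multiplying over `i` and
cancelling `∏ sin αᵢ = ∏ sin γᵢ` yields `sin d ^ m < ∏ sin xᵢ`. But the `xᵢ` have mean `d`, so by
AM-GM and the concavity of `sin` on `[0, π]`, `∏ sin xᵢ ≤ sin d ^ m`.
-/

open Real Finset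

theorem Real.pi_div_two_sub_pi_div_mem_Ioo {n : ℝ} (hn : 2 < n) :
    π / 2 - π / n ∈ Set.Ioo 0 π := by
  have : π / n < π / 2 := div_lt_div_of_pos_left pi_pos two_pos hn
  constructor <;> linarith [pi_pos, div_pos pi_pos (two_pos.trans hn)]

theorem Real.two_mul_pi_div_mem_Ioo {n : ℝ} (hn : 2 < n) : 2 * π / n ∈ Set.Ioo 0 π := by
  have hn0 : 0 < n := two_pos.trans hn
  refine ⟨by positivity, (div_lt_iff₀ hn0).2 ?_⟩
  nlinarith [pi_pos]

theorem Real.sin_mul_sin_lt_sin_mul_sin {a c d : ℝ} (hac : a + c ∈ Set.Ioo 0 π)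
    (had : a - d ∈ Set.Ioo 0 π) : sin d * sin c < sin a * sin (a + c - d) := by
  have key : sin a * sin (a + c - d) - sin d * sin c = sin (a + c) * sin (a - d) := by
    simp only [sin_add, sin_sub, cos_add]
    linear_combination (sin c * sin d) * sin_sq_add_cos_sq a
  nlinarith [mul_pos (sin_pos_of_mem_Ioo hac) (sin_pos_of_mem_Ioo had)]

theorem Real.prod_sin_le_sin_mean_pow {ι : Type*} (s : Finset ι) (x : ι → ℝ)
    (hx : ∀ i ∈ s, x i ∈ Set.Icc 0 π) :
    ∏ i ∈ s, sin (x i) ≤ sin ((#s : ℝ)⁻¹ * ∑ i ∈ s, x i) ^ #s := by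
  rcases s.eq_empty_or_nonempty with rfl | hs
  · simp
  have hn : #s ≠ 0 := hs.card_ne_zero
  have hw : ∀ i ∈ s, (0 : ℝ) ≤ (#s : ℝ)⁻¹ := fun _ _ => by positivity
  have hw_sum : ∑ _i ∈ s, (#s : ℝ)⁻¹ = 1 := by
    rw [sum_const, nsmul_eq_mul, mul_inv_cancel₀ (by exact_mod_cast hn)]
  have hsin : ∀ i ∈ s, 0 ≤ sin (x i) := fun i hi => sin_nonneg_of_mem_Icc (hx i hi)
  have amgm := geom_mean_le_arith_mean_weighted s _ _ hw hw_sum hsin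
  have jensen := strictConcaveOn_sin_Icc.concaveOn.le_map_sum hw hw_sum hx
  rw [finsetProd_rpow s _ hsin, ← mul_sum] at amgm
  simp only [smul_eq_mul, ← mul_sum] at jensen
  calc ∏ i ∈ s, sin (x i)
      = ((∏ i ∈ s, sin (x i)) ^ (#s : ℝ)⁻¹) ^ #s :=
        (rpow_inv_natCast_pow (prod_nonneg hsin) hn).symm
    _ ≤ sin ((#s : ℝ)⁻¹ * ∑ i ∈ s, x i) ^ #s :=
        pow_le_pow_left₀ (rpow_nonneg (prod_nonneg hsin) _) (amgm.trans jensen) _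

theorem exists_le_pi_div_two_sub_pi_div_card {ι : Type*} [Fintype ι]
    (hcard : 2 < Fintype.card ι) (α β γ : ι → ℝ)
    (hα : ∀ i, α i ∈ Set.Ioo 0 π) (hβ : ∀ i, β i ∈ Set.Ioo 0 π) (hγ : ∀ i, γ i ∈ Set.Ioo 0 π)
    (hsum : ∑ i, β i = 2 * π) (htri : ∀ i, α i + β i + γ i = π)
    (hclose : ∏ i, sin (α i) = ∏ i, sin (γ i)) :
    ∃ i, α i ≤ π / 2 - π / Fintype.card ι := by
  set n := Fintype.card ι
  set d := π / 2 - π / n with hd_def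
  by_contra! hd_lt
  have hd : d ∈ Set.Ioo 0 π := pi_div_two_sub_pi_div_mem_Ioo (by exact_mod_cast hcard)
  set x := fun i => α i + γ i - d
  have hx : ∀ i, x i ∈ Set.Ioo 0 π := fun i => by
    constructor <;> linarith [htri i, hd_lt i, (hγ i).1, (hβ i).1, hd.1]
  have hx_mean : (n : ℝ)⁻¹ * ∑ i, x i = d := by
    have hx_eq : ∀ i, x i = (π - d) - β i := fun i => by linarith [htri i]
    rw [sum_congr rfl fun i _ => hx_eq i, sum_sub_distrib, hsum, sum_const, card_univ,
      nsmul_eq_mul, hd_def]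
    field_simp
    ring
  have hstep : ∀ i ∈ univ, sin d * sin (γ i) < sin (α i) * sin (x i) := fun i _ => by
    refine sin_mul_sin_lt_sin_mul_sin ?_ ⟨by linarith [hd_lt i], by linarith [(hα i).2, hd.1]⟩
    constructor <;> linarith [htri i, (hβ i).1, (hβ i).2]
  have hbound := prod_sin_le_sin_mean_pow univ x fun i _ => Set.Ioo_subset_Icc_self (hx i)
  rw [card_univ, hx_mean] at hbound
  have hsin_α : 0 < ∏ i, sin (α i) := prod_pos fun i _ => sin_pos_of_mem_Ioo (hα i)
  refine lt_irrefl ((∏ i, sin (α i)) * sin d ^ n) ?_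
  calc (∏ i, sin (α i)) * sin d ^ n
      = ∏ i, sin d * sin (γ i) := by
        rw [prod_mul_distrib, prod_const, card_univ, ← hclose, mul_comm]
    _ < ∏ i, sin (α i) * sin (x i) :=
        prod_lt_prod_of_nonempty
          (fun i _ => mul_pos (sin_pos_of_mem_Ioo hd) (sin_pos_of_mem_Ioo (hγ i))) hstep
          (univ_nonempty_iff.2 (Fintype.card_pos_iff.1 (by omega)))
    _ = (∏ i, sin (α i)) * ∏ i, sin (x i) := prod_mul_distrib
    _ ≤ (∏ i, sin (α i)) * sin d ^ n := mul_le_mul_of_nonneg_left hbound hsin_α.le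

open Real in
/-- Under the paper's conditions (Cond) on the angles of a star-shaped polygon with
`m ≥ 3` vertices, `min_i αᵢ ≤ π/2 − π/m`; the bound is attained by the regular
configuration `αᵢ = γᵢ = π/2 − π/m`, `βᵢ = 2π/m`. -/
theorem min_alpha_le_regular
    (m : ℕ) (hm : 3 ≤ m) (α β γ : Fin m → ℝ)
    (hα : ∀ i, α i ∈ Set.Ioo 0 π) (hβ : ∀ i, β i ∈ Set.Ioo 0 π)
    (hγ : ∀ i, γ i ∈ Set.Ioo 0 π)
    (hsum : ∑ i, β i = 2 * π)
    (htri : ∀ i, α i + β i + γ i = π)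
    (hclose : ∏ i, Real.sin (α i) = ∏ i, Real.sin (γ i)) :
    (Finset.univ.inf' ⟨⟨0, by omega⟩, Finset.mem_univ _⟩ α ≤ π / 2 - π / m) ∧
    (∀ α' β' γ' : Fin m → ℝ,
      α' = (fun _ => π / 2 - π / m) → β' = (fun _ => 2 * π / m) →
      γ' = (fun _ => π / 2 - π / m) →
      (∀ i, α' i ∈ Set.Ioo 0 π) ∧ (∀ i, β' i ∈ Set.Ioo 0 π) ∧
      (∀ i, γ' i ∈ Set.Ioo 0 π) ∧ (∑ i, β' i = 2 * π) ∧
      (∀ i, α' i + β' i + γ' i = π) ∧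
      (∏ i, Real.sin (α' i) = ∏ i, Real.sin (γ' i)) ∧
      Finset.univ.inf' ⟨⟨0, by omega⟩, Finset.mem_univ _⟩ α' = π / 2 - π / m) := by
  have hm' : (2 : ℝ) < m := by exact_mod_cast hm
  refine ⟨?_, ?_⟩
  · obtain ⟨i, hi⟩ := exists_le_pi_div_two_sub_pi_div_card (by rw [Fintype.card_fin]; omega)
      α β γ hα hβ hγ hsum htri hclose
    exact (inf'_le _ (mem_univ i)).trans (by simpa using hi)
  · rintro _ _ _ rfl rfl rfl
    have hd := pi_div_two_sub_pi_div_mem_Ioo hm'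
    refine ⟨fun _ => hd, fun _ => two_mul_pi_div_mem_Ioo hm', fun _ => hd, ?_,
      fun _ => by ring, rfl, inf'_const _ _⟩
    rw [sum_const, card_univ, Fintype.card_fin, nsmul_eq_mul]
    field_simp
end

section
/- Let m ≥ 1 and let α_i, β_i, γ_i ∈ (0, π) for i = 1, …, m satisfy: ∑_i β_i = 2π, α_i + β_i + γ_i = π for each i, and ∏_i sin α_i = ∏_i sin γ_i. Then min_i α_i < π/2. -/
/-! If every `αᵢ ≥ π/2`, then `0 < γᵢ < π - αᵢ ≤ π/2` because `βᵢ > 0`, so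
`sin γᵢ < sin (π - αᵢ) = sin αᵢ` for every `i`; multiplying these strict inequalities between
positive numbers contradicts `∏ sin αᵢ = ∏ sin γᵢ`. -/

open Real

theorem Real.sin_lt_sin_of_lt_pi_sub {a c : ℝ} (ha : π / 2 ≤ a) (hc : -(π / 2) ≤ c)
    (hca : c < π - a) : sin c < sin a := by
  rw [← sin_pi_sub a]
  exact sin_lt_sin_of_lt_of_le_pi_div_two hc (by linarith) hca

open Real in
/-- Under the paper's conditions (Cond), the minimal angle `αᵢ` is less than `π/2`. -/
theorem min_alpha_lt_pi_div_two
    (m : ℕ) (hm : 1 ≤ m) (α β γ : Fin m → ℝ)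
    (hβ : ∀ i, β i ∈ Set.Ioo 0 π)
    (hγ : ∀ i, γ i ∈ Set.Ioo 0 π)
    (htri : ∀ i, α i + β i + γ i = π)
    (hclose : ∏ i, Real.sin (α i) = ∏ i, Real.sin (γ i)) :
    Finset.univ.inf' ⟨⟨0, by omega⟩, Finset.mem_univ _⟩ α < π / 2 := by
  refine (Finset.inf'_lt_iff _).2 ?_
  by_contra! hα_ge
  have hsin_lt : ∀ i ∈ Finset.univ, sin (γ i) < sin (α i) := fun i _ =>
    sin_lt_sin_of_lt_pi_sub (hα_ge i (Finset.mem_univ i)) (by linarith [(hγ i).1, pi_pos])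
      (by linarith [(hβ i).1, htri i])
  have hsin_pos : ∀ i ∈ Finset.univ, 0 < sin (γ i) := fun i _ =>
    sin_pos_of_pos_of_lt_pi (hγ i).1 (hγ i).2
  exact (Finset.prod_lt_prod_of_nonempty hsin_pos hsin_lt
    ⟨⟨0, by omega⟩, Finset.mem_univ _⟩).ne' hclose
end

section
/- Let a < 0 and b ∈ ℝ, and let 𝒦 be the 2×2 real matrix [[a, −b], [b, a]]. For every x ∈ ℝ² with x ≠ 0 and every t ≥ 0, the point exp(t𝒦)·x lies in the same closed half-plane, determined by the line { x + ε·𝒦x : ε ∈ ℝ }, as the origin; equivalently, the cross products (𝒦x) × (exp(t𝒦)x − x) and (𝒦x) × (0 − x) (where u × v = u_1 v_2 − u_2 v_1) are both ≥ 0 or both ≤ 0 for all t ≥ 0. -/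
/-!
In the coordinates of the plane, `(𝒦x) × (exp(t𝒦)x − x) = |x|² (b − F(t))` and
`(𝒦x) × (0 − x) = |x|² b`, where `F(t) = dampedOsc a b t = e^{at} (b cos bt − a sin bt)`. Replacing `b` by `−b`
negates `F`, so it suffices to show `F(t) ≤ b = F(0)` for `b ≥ 0`. Since
`F'(t) = −(a² + b²) e^{at} sin bt`, `F` decreases on `[0, π/b]`; where `sin bt ≤ 0` the bound is
immediate, and shifting `t` by a period `2π/b` multiplies `F` by `e^{2πa/b} ≤ 1`.
-/

open Real Set Matrix

theorem Matrix.exp_conformal (c d : ℝ) :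
    NormedSpace.exp !![c, -d; d, c] = Real.exp c • !![cos d, -sin d; sin d, cos d] := by
  -- `!![c, -d; d, c]` is multiplication by `c + d i` in the basis `(1, i)`; any algebra norm on
  -- matrices lets `map_exp` transport `Complex.exp` along that embedding.
  let : NormedRing (Matrix (Fin 2) (Fin 2) ℝ) := Matrix.linftyOpNormedRing
  let : NormedAlgebra ℝ (Matrix (Fin 2) (Fin 2) ℝ) := Matrix.linftyOpNormedAlgebra
  have h := NormedSpace.map_exp (Algebra.leftMulMatrix Complex.basisOneI)
    (Algebra.leftMulMatrix Complex.basisOneI).toLinearMap.continuous_of_finiteDimensional ⟨c, d⟩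
  rw [Algebra.leftMulMatrix_complex, Algebra.leftMulMatrix_complex, ← Complex.exp_eq_exp_ℂ] at h
  refine h.symm.trans ?_
  ext i j
  fin_cases i <;> fin_cases j <;> simp [Complex.exp_re, Complex.exp_im]

theorem Matrix.exp_smul_conformal (a b t : ℝ) :
    NormedSpace.exp (t • !![a, -b; b, a]) =
      Real.exp (a * t) • !![cos (b * t), -sin (b * t); sin (b * t), cos (b * t)] := by
  rw [← exp_conformal]
  congr 1
  ext i j
  fin_cases i <;> fin_cases j <;> simp [mul_comm]

noncomputable def dampedOsc (a b t : ℝ) : ℝ :=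
  Real.exp (a * t) * (b * cos (b * t) - a * sin (b * t))

section dampedOsc

variable {a b t : ℝ}

@[simp]
lemma dampedOsc_zero (a b : ℝ) : dampedOsc a b 0 = b := by simp [dampedOsc]

lemma dampedOsc_neg_freq (a b t : ℝ) : dampedOsc a (-b) t = -dampedOsc a b t := by
  simp only [dampedOsc, neg_mul, cos_neg, sin_neg]
  ring

lemma hasDerivAt_dampedOsc (a b t : ℝ) :
    HasDerivAt (dampedOsc a b) (-(a ^ 2 + b ^ 2) * Real.exp (a * t) * sin (b * t)) t := by
  have hat : HasDerivAt (a * ·) a t := by simpa using (hasDerivAt_id t).const_mul a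
  have hbt : HasDerivAt (b * ·) b t := by simpa using (hasDerivAt_id t).const_mul b
  refine (hat.exp.mul ((hbt.cos.const_mul b).sub (hbt.sin.const_mul a))).congr_deriv ?_
  simp only [Pi.sub_apply]
  ring

lemma antitoneOn_dampedOsc (a : ℝ) (hb : 0 < b) : AntitoneOn (dampedOsc a b) (Icc 0 (π / b)) := by
  refine antitoneOn_of_hasDerivWithinAt_nonpos (convex_Icc _ _)
    (fun s _ ↦ (hasDerivAt_dampedOsc a b s).continuousAt.continuousWithinAt)
    (fun s _ ↦ (hasDerivAt_dampedOsc a b s).hasDerivWithinAt) fun s hs ↦ ?_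
  rw [interior_Icc] at hs
  have hsin : 0 ≤ sin (b * s) := sin_nonneg_of_nonneg_of_le_pi (by nlinarith [hs.1])
    (by rw [← le_div_iff₀' hb]; exact hs.2.le)
  exact mul_nonpos_of_nonpos_of_nonneg
    (mul_nonpos_of_nonpos_of_nonneg (neg_nonpos.2 (by positivity)) (exp_pos _).le) hsin

lemma dampedOsc_le_of_sin_nonpos (ha : a ≤ 0) (hb : 0 ≤ b) (ht : 0 ≤ t)
    (hsin : sin (b * t) ≤ 0) : dampedOsc a b t ≤ b := by
  have hexp : Real.exp (a * t) ≤ 1 := exp_le_one_iff.2 (mul_nonpos_of_nonpos_of_nonneg ha ht)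
  have hcos : b * cos (b * t) ≤ b := mul_le_of_le_one_right hb (cos_le_one _)
  have hasin : 0 ≤ a * sin (b * t) := mul_nonneg_of_nonpos_of_nonpos ha hsin
  unfold dampedOsc
  nlinarith [exp_pos (a * t)]

lemma dampedOsc_add_int_mul_period (a t : ℝ) (n : ℤ) (hb : b ≠ 0) :
    dampedOsc a b (t + n * (2 * π) / b) = Real.exp (a * (n * (2 * π) / b)) * dampedOsc a b t := by
  have : b * (t + n * (2 * π) / b) = b * t + n * (2 * π) := by field_simp
  simp only [dampedOsc, this, sin_add_int_mul_two_pi, cos_add_int_mul_two_pi, mul_add, exp_add]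
  ring

lemma dampedOsc_le (ha : a ≤ 0) (hb : 0 ≤ b) (ht : 0 ≤ t) : dampedOsc a b t ≤ b := by
  rcases hb.eq_or_lt with rfl | hb_pos
  · simp [dampedOsc]
  set θ := toIcoMod two_pi_pos 0 (b * t)
  set n := toIcoDiv two_pi_pos 0 (b * t)
  obtain ⟨hθ0, hθ2π⟩ : θ ∈ Ico 0 (2 * π) := toIcoMod_mem_Ico' _ _
  have hθ : b * t = θ + n * (2 * π) := by
    linarith [self_sub_toIcoDiv_mul two_pi_pos 0 (b * t)]
  have hn : 0 ≤ n := by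
    have : (-1 : ℝ) < n := by nlinarith [pi_pos]
    have : (-1 : ℤ) < n := by exact_mod_cast this
    omega
  rcases le_or_gt θ π with hθπ | hθπ
  · have hmem : θ / b ∈ Icc 0 (π / b) := ⟨by positivity, by gcongr⟩
    have hle : dampedOsc a b (θ / b) ≤ b := by
      simpa using antitoneOn_dampedOsc a hb_pos ⟨le_rfl, by positivity⟩ hmem hmem.1
    have hexp : Real.exp (a * (n * (2 * π) / b)) ≤ 1 :=
      exp_le_one_iff.2 (mul_nonpos_of_nonpos_of_nonneg ha (by positivity))
    have ht' : t = θ / b + n * (2 * π) / b := by field_simp; linarith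
    rw [ht', dampedOsc_add_int_mul_period a _ n hb_pos.ne']
    rcases le_total 0 (dampedOsc a b (θ / b)) with hpos | hneg
    · exact (mul_le_of_le_one_left hpos hexp).trans hle
    · exact (mul_nonpos_of_nonneg_of_nonpos (exp_pos _).le hneg).trans hb
  · refine dampedOsc_le_of_sin_nonpos ha hb ht ?_
    rw [hθ, sin_add_int_mul_two_pi, ← sin_sub_two_pi]
    exact sin_nonpos_of_nonpos_of_neg_pi_le (by linarith) (by linarith)

end dampedOsc

theorem semitrajectory_same_halfplane_as_origin_general
    (a b : ℝ) (ha : a < 0)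
    (Kmat : Matrix (Fin 2) (Fin 2) ℝ) (hK : Kmat = !![a, -b; b, a])
    (x : Fin 2 → ℝ)
    (cross : (Fin 2 → ℝ) → (Fin 2 → ℝ) → ℝ)
    (hcross : ∀ u v, cross u v = u 0 * v 1 - u 1 * v 0) :
    (∀ t : ℝ, 0 ≤ t →
        0 ≤ cross (Kmat.mulVec x) ((NormedSpace.exp (t • Kmat)).mulVec x - x) ∧
        0 ≤ cross (Kmat.mulVec x) (0 - x)) ∨
    (∀ t : ℝ, 0 ≤ t →
        cross (Kmat.mulVec x) ((NormedSpace.exp (t • Kmat)).mulVec x - x) ≤ 0 ∧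
        cross (Kmat.mulVec x) (0 - x) ≤ 0) := by
  subst hK
  have hmove (t : ℝ) :
      cross (!![a, -b; b, a] *ᵥ x) (NormedSpace.exp (t • !![a, -b; b, a]) *ᵥ x - x) =
        (x 0 ^ 2 + x 1 ^ 2) * (b - dampedOsc a b t) := by
    rw [hcross, exp_smul_conformal]
    simp only [Pi.sub_apply, smul_mulVec, Pi.smul_apply, mulVec_fin_two, of_apply, cons_val_zero, cons_val_one, cons_val_fin_one, smul_eq_mul, dampedOsc]
    ring
  have hbase : cross (!![a, -b; b, a] *ᵥ x) (0 - x) = (x 0 ^ 2 + x 1 ^ 2) * b := by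
    rw [hcross]
    simp only [Pi.sub_apply, Pi.zero_apply, mulVec_fin_two, of_apply, cons_val_zero, cons_val_one, cons_val_fin_one]
    ring
  have hr : 0 ≤ x 0 ^ 2 + x 1 ^ 2 := by positivity
  simp only [hmove, hbase]
  rcases le_total 0 b with hb | hb
  · exact .inl fun t ht ↦
      ⟨mul_nonneg hr (sub_nonneg.2 (dampedOsc_le ha.le hb ht)), mul_nonneg hr hb⟩
  · refine .inr fun t ht ↦ ⟨mul_nonpos_of_nonneg_of_nonpos hr ?_, mul_nonpos_of_nonneg_of_nonpos hr hb⟩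
    have := dampedOsc_le ha.le (neg_nonneg.2 hb) ht
    rw [dampedOsc_neg_freq] at this
    linarith

/-- For the rotation-with-contraction matrix `𝒦 = [[a, −b], [b, a]]` with `a < 0`, every
forward semi-trajectory `exp(t𝒦) x` (`t ≥ 0`) stays in the same closed half-plane,
bounded by the line `{x + ε 𝒦x}`, containing the origin: the cross products
`(𝒦x) × (exp(t𝒦)x − x)` and `(𝒦x) × (0 − x)` are both `≥ 0` for all `t ≥ 0` or both
`≤ 0` for all `t ≥ 0`. -/
theorem semitrajectory_same_halfplane_as_origin
    (a b : ℝ) (ha : a < 0)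
    (Kmat : Matrix (Fin 2) (Fin 2) ℝ) (hK : Kmat = !![a, -b; b, a])
    (x : Fin 2 → ℝ) (hx : x ≠ 0)
    (cross : (Fin 2 → ℝ) → (Fin 2 → ℝ) → ℝ)
    (hcross : ∀ u v, cross u v = u 0 * v 1 - u 1 * v 0) :
    (∀ t : ℝ, 0 ≤ t →
        0 ≤ cross (Kmat.mulVec x) ((NormedSpace.exp (t • Kmat)).mulVec x - x) ∧
        0 ≤ cross (Kmat.mulVec x) (0 - x)) ∨
    (∀ t : ℝ, 0 ≤ t →
        cross (Kmat.mulVec x) ((NormedSpace.exp (t • Kmat)).mulVec x - x) ≤ 0 ∧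
        cross (Kmat.mulVec x) (0 - x) ≤ 0) :=
  semitrajectory_same_halfplane_as_origin_general a b ha Kmat hK x cross hcross
end
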